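/- Pointwise energy control in the degenerate zone: there is a constant C = C(a, γ, ρ∞, u∞) such that for all ρ > 0 with ρ < ρ∞/2 or ρ > 2ρ∞, and all m ∈ R^d, |m − ρ∞u∞|^{2γ/(γ+1)} ≤ C·E(ρ, m | ρ∞, u∞), where E is the relative energy with P(ρ) = (a/(γ−1))ρ^γ. -/
import Mathlib


open scoped RealInnerProductSpace

lemma two_rpow_lb {γ : ℝ} (hγ : 1 < γ) : 2 + 2 * Real.log 2 * (γ - 1) ≤ (2:ℝ) ^ γ := by
  have h1 : (2:ℝ) ^ γ = 2 * Real.exp (Real.log 2 * (γ - 1)) := by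
    rw [Real.rpow_def_of_pos (by norm_num : (0:ℝ) < 2)]
    rw [← Real.exp_log (by norm_num : (0:ℝ) < 2), ← Real.exp_add]
    simp only [Real.log_exp]
    congr 1
    ring
  rw [h1]
  nlinarith [Real.add_one_le_exp (Real.log 2 * (γ - 1))]

lemma two_rpow_neg_lb {γ : ℝ} (hγ : 1 < γ) : (1 - Real.log 2 * (γ - 1))/2 ≤ (2:ℝ) ^ (-γ) := by
  have h1 : (2:ℝ) ^ (-γ) = Real.exp (Real.log 2 * (1 - γ)) / 2 := by
    rw [Real.rpow_def_of_pos (by norm_num : (0:ℝ) < 2)]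
    rw [eq_div_iff (by norm_num : (2:ℝ) ≠ 0), ← Real.exp_log (by norm_num : (0:ℝ) < 2), ← Real.exp_add]
    simp only [Real.log_exp]
    congr 1
    ring
  rw [h1]
  nlinarith [Real.add_one_le_exp (Real.log 2 * (1 - γ))]

set_option maxHeartbeats 1000000 in
lemma phi_zone {γ : ℝ} (hγ : 1 < γ) :
    ∃ c : ℝ, 0 < c ∧ ∀ t : ℝ, 0 < t → (t < 1/2 ∨ 2 < t) →
      c * (1 + t ^ γ) ≤ t ^ γ - γ * t + (γ - 1) := by
  set L := Real.log 2 with hLdef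
  have hL1 : 1/2 < L := by
    have := Real.log_two_gt_d9; rw [hLdef]; linarith
  have hL2 : L < 1 := by
    have := Real.log_two_lt_d9; rw [hLdef]; linarith
  set p := (2:ℝ) ^ γ with hpdef
  set q := (2:ℝ) ^ (-γ) with hqdef
  have hp : 2 + 2 * L * (γ - 1) ≤ p := two_rpow_lb hγ
  have hq : (1 - L * (γ - 1)) / 2 ≤ q := two_rpow_neg_lb hγ
  have hq0 : 0 < q := Real.rpow_pos_of_pos (by norm_num) _
  have hp0 : 0 < p := Real.rpow_pos_of_pos (by norm_num) _
  have hpq : p * q = 1 := by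
    rw [hpdef, hqdef, ← Real.rpow_add (by norm_num : (0:ℝ) < 2)]
    simp
  have hp2 : 2 < p := by nlinarith
  have hq2 : q < 1/2 := by nlinarith
  have hpγ : γ + 1 < p := by nlinarith
  -- constants
  set ε : ℝ := min (1 - 2*q) ((p - γ - 1)/p) with hεdef
  have hε0 : 0 < ε := lt_min (by linarith) (div_pos (by linarith) hp0)
  have hε1 : ε ≤ 1 - 2*q := min_le_left _ _
  have hε2 : ε ≤ (p - γ - 1)/p := min_le_right _ _
  have hε2' : ε * p ≤ p - γ - 1 := by
    calc ε * p ≤ ((p - γ - 1)/p) * p := mul_le_mul_of_nonneg_right hε2 hp0.le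
      _ = p - γ - 1 := by field_simp
  set c1 : ℝ := (q + γ/2 - 1) * (2/3) with hc1def
  have hqhalf : 0 < q + γ/2 - 1 := by nlinarith
  have hc10 : 0 < c1 := by rw [hc1def]; nlinarith
  refine ⟨min c1 (ε/2), lt_min hc10 (by linarith), ?_⟩
  intro t ht hzone
  rcases hzone with h | h
  · -- t < 1/2
    have hber : q * (1 + γ * (2*t - 1)) ≤ t ^ γ := by
      have h1 : (1:ℝ) + γ * (2*t - 1) ≤ (2*t) ^ γ := by
        have := one_add_mul_self_le_rpow_one_add
          (show (-1:ℝ) ≤ 2*t - 1 by linarith) hγ.le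
        simpa using this
      have h2 : (2*t) ^ γ = p * t ^ γ := Real.mul_rpow (by norm_num) ht.le
      have h3 : q * (2*t)^γ = t ^ γ := by
        rw [h2, ← mul_assoc, mul_comm q p, hpq, one_mul]
      calc q * (1 + γ * (2*t - 1)) ≤ q * (2*t)^γ :=
            mul_le_mul_of_nonneg_left h1 hq0.le
        _ = t ^ γ := h3
    have htγ : t ^ γ ≤ q := by
      have h0 : t ^ γ ≤ (1/2 : ℝ) ^ γ :=
        Real.rpow_le_rpow ht.le h.le (by linarith)
      have h12 : ((1:ℝ)/2) ^ γ = q := by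
        rw [hqdef, Real.rpow_neg (by norm_num : (0:ℝ) ≤ 2)]
        rw [one_div, Real.inv_rpow (by norm_num : (0:ℝ) ≤ 2)]
      linarith [h0, h12.le]
    have hφlb : q + γ/2 - 1 ≤ t ^ γ - γ * t + (γ - 1) := by
      nlinarith [mul_nonneg (mul_nonneg (by linarith : (0:ℝ) ≤ γ)
        (by linarith : (0:ℝ) ≤ 1 - 2*q)) (by linarith : (0:ℝ) ≤ 1/2 - t)]
    have hm1 : min c1 (ε/2) * (1 + t ^ γ) ≤ c1 * (1 + t^γ) :=
      mul_le_mul_of_nonneg_right (min_le_left _ _) (by nlinarith [Real.rpow_nonneg ht.le γ])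
    have hc1b : c1 * (1 + t^γ) ≤ q + γ/2 - 1 := by
      have h1tγ : 1 + t^γ ≤ 3/2 := by nlinarith
      have h2 := mul_le_mul_of_nonneg_left h1tγ hc10.le
      have heq : c1 * (3/2) = q + γ/2 - 1 := by rw [hc1def]; ring
      linarith
    linarith
  · -- 2 < t
    have hber : p * (1 + γ * (t/2 - 1)) ≤ t ^ γ := by
      have h1 : (1:ℝ) + γ * (t/2 - 1) ≤ (t/2) ^ γ := by
        have := one_add_mul_self_le_rpow_one_add
          (show (-1:ℝ) ≤ t/2 - 1 by linarith) hγ.le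
        simpa using this
      have h2 : p * (t/2)^γ = t ^ γ := by
        rw [Real.div_rpow ht.le (by norm_num : (0:ℝ) ≤ 2), ← hpdef]
        exact mul_div_cancel₀ _ (ne_of_gt hp0)
      calc p * (1 + γ * (t/2 - 1)) ≤ p * (t/2)^γ :=
            mul_le_mul_of_nonneg_left h1 hp0.le
        _ = t ^ γ := h2
    have htγ1 : (1:ℝ) ≤ t ^ γ :=
      Real.one_le_rpow (by linarith) (by linarith)
    have hε1' : (0:ℝ) ≤ 1 - ε := by linarith
    have hS : γ + 1 ≤ (1-ε)*p := by nlinarith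
    have hS2 : 2 ≤ (1-ε)*p := by linarith
    have hmul : (1-ε) * (p*(1+γ*(t/2-1))) ≤ (1-ε) * t^γ :=
      mul_le_mul_of_nonneg_left hber hε1'
    have hεt : ε * t ^ γ ≤ t ^ γ - γ * t + (γ - 1) := by
      nlinarith [hmul, mul_nonneg (by linarith : (0:ℝ) ≤ t - 2)
        (by nlinarith : (0:ℝ) ≤ γ*((1-ε)*p/2 - 1))]
    have hm1 : min c1 (ε/2) * (1 + t ^ γ) ≤ (ε/2) * (1 + t^γ) :=
      mul_le_mul_of_nonneg_right (min_le_right _ _) (by nlinarith)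
    have h2t : (ε/2) * (1 + t^γ) ≤ ε * t^γ := by nlinarith
    linarith

lemma internal_lb {a γ ρ_inf : ℝ} (ha : 0 < a) (hγ : 1 < γ) (hρ_inf : 0 < ρ_inf) :
    ∃ c : ℝ, 0 < c ∧ ∀ ρ : ℝ, 0 < ρ → (ρ < ρ_inf / 2 ∨ 2 * ρ_inf < ρ) →
      c * (1 + ρ ^ γ) ≤ a / (γ - 1) * ρ ^ γ
        - a * γ / (γ - 1) * ρ_inf ^ (γ - 1) * (ρ - ρ_inf) - a / (γ - 1) * ρ_inf ^ γ := by
  obtain ⟨c, hc, hφ⟩ := phi_zone hγ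
  have hXpos : (0:ℝ) < ρ_inf ^ γ := Real.rpow_pos_of_pos hρ_inf _
  set M : ℝ := max 1 (ρ_inf ^ γ) with hMdef
  have hM0 : 0 < M := lt_max_of_lt_left one_pos
  have hγ1 : (0:ℝ) < γ - 1 := by linarith
  have hγ1' : γ - 1 ≠ 0 := ne_of_gt hγ1
  refine ⟨a / (γ - 1) * ρ_inf ^ γ * c / M,
    div_pos (mul_pos (mul_pos (div_pos ha hγ1) hXpos) hc) hM0, ?_⟩
  intro ρ hρ hzone
  set t : ℝ := ρ / ρ_inf with htdef
  have ht0 : 0 < t := div_pos hρ hρ_inf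
  have h1 : ρ ^ γ = ρ_inf ^ γ * t ^ γ := by
    rw [htdef, Real.div_rpow hρ.le hρ_inf.le]
    field_simp
  have h2 : ρ_inf ^ (γ - 1) = ρ_inf ^ γ / ρ_inf := by
    rw [Real.rpow_sub hρ_inf, Real.rpow_one]
  have hzone' : t < 1/2 ∨ 2 < t := by
    rcases hzone with h | h
    · left; rw [htdef, div_lt_iff₀ hρ_inf]; linarith
    · right; rw [htdef, lt_div_iff₀ hρ_inf]; linarith
  have hkey : a / (γ - 1) * ρ ^ γ
        - a * γ / (γ - 1) * ρ_inf ^ (γ - 1) * (ρ - ρ_inf) - a / (γ - 1) * ρ_inf ^ γ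
      = a / (γ - 1) * ρ_inf ^ γ * (t ^ γ - γ * t + (γ - 1)) := by
    rw [h1, h2, htdef]
    field_simp
    ring
  rw [hkey]
  have hφt := hφ t ht0 hzone'
  have hcoef : (0:ℝ) ≤ a / (γ - 1) * ρ_inf ^ γ :=
    (mul_pos (div_pos ha hγ1) hXpos).le
  have step1 : a / (γ - 1) * ρ_inf ^ γ * (c * (1 + t ^ γ))
      ≤ a / (γ - 1) * ρ_inf ^ γ * (t ^ γ - γ * t + (γ - 1)) :=
    mul_le_mul_of_nonneg_left hφt hcoef
  refine le_trans ?_ step1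
  -- c' * (1 + ρ^γ) ≤ A * c * (1 + t^γ)  with c' = A*c/M, 1+ρ^γ ≤ M*(1+t^γ)
  have htγ0 : (0:ℝ) ≤ t ^ γ := Real.rpow_nonneg ht0.le _
  have hbound : 1 + ρ ^ γ ≤ M * (1 + t ^ γ) := by
    have e1 : (1:ℝ) ≤ M := le_max_left _ _
    have e2 : ρ_inf ^ γ ≤ M := le_max_right _ _
    rw [h1]
    nlinarith
  calc a / (γ - 1) * ρ_inf ^ γ * c / M * (1 + ρ ^ γ)
      ≤ a / (γ - 1) * ρ_inf ^ γ * c / M * (M * (1 + t ^ γ)) := by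
        apply mul_le_mul_of_nonneg_left hbound
          (div_pos (mul_pos (mul_pos (div_pos ha hγ1) hXpos) hc) hM0).le
    _ = a / (γ - 1) * ρ_inf ^ γ * (c * (1 + t ^ γ)) := by
        field_simp

lemma young_pt {γ : ℝ} (hγ : 1 < γ) {x ρ : ℝ} (hx : 0 ≤ x) (hρ : 0 < ρ) :
    x ^ (2 * γ / (γ + 1)) ≤ x ^ 2 / ρ + ρ ^ γ := by
  have hγ1 : (0:ℝ) < γ + 1 := by linarith
  set w₁ : ℝ := γ / (γ + 1) with hw₁
  set w₂ : ℝ := 1 / (γ + 1) with hw₂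
  have hw₁0 : 0 ≤ w₁ := by positivity
  have hw₂0 : 0 ≤ w₂ := by positivity
  have hsum : w₁ + w₂ = 1 := by rw [hw₁, hw₂]; field_simp
  have hp₁ : (0:ℝ) ≤ x ^ 2 / ρ := by positivity
  have hp₂ : (0:ℝ) ≤ ρ ^ γ := Real.rpow_nonneg hρ.le _
  have hkey : x ^ (2 * γ / (γ + 1)) = (x ^ 2 / ρ) ^ w₁ * (ρ ^ γ) ^ w₂ := by
    rw [Real.div_rpow (by positivity) hρ.le,
        ← Real.rpow_natCast x 2, ← Real.rpow_mul hx, ← Real.rpow_mul hρ.le]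
    have h2 : γ * w₂ = w₁ := by rw [hw₁, hw₂]; field_simp
    rw [h2, div_mul_cancel₀ _ (ne_of_gt (Real.rpow_pos_of_pos hρ w₁))]
    congr 1
    rw [hw₁]
    push_cast
    ring
  rw [hkey]
  calc (x ^ 2 / ρ) ^ w₁ * (ρ ^ γ) ^ w₂ ≤ w₁ * (x ^ 2 / ρ) + w₂ * (ρ ^ γ) :=
        Real.geom_mean_le_arith_mean2_weighted hw₁0 hw₂0 hp₁ hp₂ hsum
    _ ≤ x ^ 2 / ρ + ρ ^ γ := by nlinarith [hp₁, hp₂]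

lemma rpow_self_le {s θ γ : ℝ} (hs : 0 ≤ s) (hθ : 0 ≤ θ) (hθγ : θ ≤ γ) :
    s ^ θ ≤ 1 + s ^ γ := by
  rcases le_or_gt s 1 with h | h
  · have h1 : s ^ θ ≤ 1 := Real.rpow_le_one hs h hθ
    have h2 : (0:ℝ) ≤ s ^ γ := Real.rpow_nonneg hs _
    linarith
  · have h1 : s ^ θ ≤ s ^ γ := Real.rpow_le_rpow_of_exponent_le h.le hθγ
    linarith

lemma sum_rpow_le {x y θ : ℝ} (hx : 0 ≤ x) (hy : 0 ≤ y) (hθ : 0 ≤ θ) :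
    (x + y) ^ θ ≤ 2 ^ θ * (x ^ θ + y ^ θ) := by
  have hmax : 0 ≤ max x y := le_max_of_le_left hx
  have h1 : x + y ≤ 2 * max x y := by
    rcases le_total x y with h | h
    · rw [max_eq_right h]; linarith
    · rw [max_eq_left h]; linarith
  calc (x + y) ^ θ ≤ (2 * max x y) ^ θ := Real.rpow_le_rpow (by linarith) h1 hθ
    _ = 2 ^ θ * (max x y) ^ θ := Real.mul_rpow (by norm_num) hmax
    _ ≤ 2 ^ θ * (x ^ θ + y ^ θ) := by
        apply mul_le_mul_of_nonneg_left _ (Real.rpow_nonneg (by norm_num) _)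
        rcases le_total x y with h | h
        · rw [max_eq_right h]
          have := Real.rpow_nonneg hx θ
          linarith
        · rw [max_eq_left h]
          have := Real.rpow_nonneg hy θ
          linarith

set_option maxHeartbeats 1000000 in
/-- Pointwise energy control in the degenerate zone `ρ < ρ∞/2` or `ρ > 2ρ∞`. -/
theorem energy_control_degenerate (d : ℕ) (hd : 1 ≤ d) (a γ : ℝ) (ha : 0 < a)
    (hγ : 1 < γ) (ρ_inf : ℝ) (hρ_inf : 0 < ρ_inf) (u_inf : EuclideanSpace ℝ (Fin d)) :
    ∃ C : ℝ, 0 < C ∧ ∀ ρ : ℝ, 0 < ρ → (ρ < ρ_inf / 2 ∨ 2 * ρ_inf < ρ) →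
      ∀ m : EuclideanSpace ℝ (Fin d),
        ‖m - ρ_inf • u_inf‖ ^ (2 * γ / (γ + 1))
          ≤ C * (ρ * ‖(1 / ρ) • m - u_inf‖ ^ 2 / 2
            + a / (γ - 1) * ρ ^ γ
            - a * γ / (γ - 1) * ρ_inf ^ (γ - 1) * (ρ - ρ_inf)
            - a / (γ - 1) * ρ_inf ^ γ) := by
  obtain ⟨c, hc, hI⟩ := internal_lb ha hγ hρ_inf
  have hγ1 : (0:ℝ) < γ + 1 := by linarith
  set θ : ℝ := 2 * γ / (γ + 1) with hθdef
  have hθ0 : (0:ℝ) ≤ θ := by positivity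
  have hθγ : θ ≤ γ := by rw [hθdef, div_le_iff₀ hγ1]; nlinarith
  set U : ℝ := ‖u_inf‖ with hUdef
  have hU0 : (0:ℝ) ≤ U := norm_nonneg _
  have h2θ : (0:ℝ) < 2 ^ θ := Real.rpow_pos_of_pos two_pos θ
  have hUθ : (0:ℝ) ≤ U ^ θ := Real.rpow_nonneg hU0 _
  have hρiθ : (0:ℝ) ≤ ρ_inf ^ θ := Real.rpow_nonneg hρ_inf.le _
  set B : ℝ := 2 ^ θ + 2 ^ θ * (2 ^ θ * (1 + ρ_inf ^ θ) * U ^ θ) with hBdef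
  have hB0 : 0 < B := by
    have h1 : (0:ℝ) ≤ 2 ^ θ * (2 ^ θ * (1 + ρ_inf ^ θ) * U ^ θ) := by positivity
    linarith
  refine ⟨2 ^ θ * 2 + B / c, by positivity, ?_⟩
  intro ρ hρ hzone m
  set x : ℝ := ‖m - ρ • u_inf‖ with hxdef
  have hx0 : (0:ℝ) ≤ x := norm_nonneg _
  -- rewrite the kinetic term
  have hsm : (1 / ρ) • m - u_inf = (1 / ρ) • (m - ρ • u_inf) := by
    rw [smul_sub, smul_smul, one_div, inv_mul_cancel₀ (ne_of_gt hρ), one_smul]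
  have hxnorm : ‖(1 / ρ) • m - u_inf‖ = x / ρ := by
    rw [hsm, norm_smul, Real.norm_eq_abs, abs_of_pos (by positivity : (0:ℝ) < 1/ρ), hxdef]
    ring
  have hkin : ρ * ‖(1 / ρ) • m - u_inf‖ ^ 2 / 2 = x ^ 2 / ρ / 2 := by
    rw [hxnorm]
    field_simp
  rw [hkin]
  -- triangle inequality
  have hM : ‖m - ρ_inf • u_inf‖ ≤ x + (ρ + ρ_inf) * U := by
    have hid : m - ρ_inf • u_inf = (m - ρ • u_inf) + (ρ - ρ_inf) • u_inf := by
      rw [sub_smul]; abel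
    rw [hid]
    refine le_trans (norm_add_le _ _) ?_
    rw [norm_smul, Real.norm_eq_abs]
    have habs : |ρ - ρ_inf| ≤ ρ + ρ_inf := by
      rw [abs_le]; constructor <;> linarith
    have := mul_le_mul_of_nonneg_right habs hU0
    rw [hxdef, hUdef]
    linarith [this]
  -- rpow chain
  have hMθ : ‖m - ρ_inf • u_inf‖ ^ θ ≤ 2 ^ θ * (x ^ θ + ((ρ + ρ_inf) * U) ^ θ) :=
    le_trans (Real.rpow_le_rpow (norm_nonneg _) hM hθ0)
      (sum_rpow_le hx0 (by positivity) hθ0)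
  have hyoung : x ^ θ ≤ x ^ 2 / ρ + ρ ^ γ := young_pt hγ hx0 hρ
  have hY : ((ρ + ρ_inf) * U) ^ θ ≤ 2 ^ θ * (1 + ρ_inf ^ θ) * U ^ θ * (1 + ρ ^ γ) := by
    have e1 : ((ρ + ρ_inf) * U) ^ θ = (ρ + ρ_inf) ^ θ * U ^ θ :=
      Real.mul_rpow (by positivity) hU0
    have e2 : (ρ + ρ_inf) ^ θ ≤ 2 ^ θ * (ρ ^ θ + ρ_inf ^ θ) :=
      sum_rpow_le hρ.le hρ_inf.le hθ0
    have e3 : ρ ^ θ ≤ 1 + ρ ^ γ := rpow_self_le hρ.le hθ0 hθγ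
    have hργ : (0:ℝ) ≤ ρ ^ γ := Real.rpow_nonneg hρ.le _
    have e4 : (ρ + ρ_inf) ^ θ ≤ 2 ^ θ * (1 + ρ_inf ^ θ) * (1 + ρ ^ γ) := by
      have e5 : 2 ^ θ * (ρ ^ θ + ρ_inf ^ θ) ≤ 2 ^ θ * (1 + ρ_inf ^ θ) * (1 + ρ ^ γ) := by
        have e6 : ρ ^ θ + ρ_inf ^ θ ≤ (1 + ρ_inf ^ θ) * (1 + ρ ^ γ) := by nlinarith
        nlinarith
      linarith
    calc ((ρ + ρ_inf) * U) ^ θ = (ρ + ρ_inf) ^ θ * U ^ θ := e1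
      _ ≤ (2 ^ θ * (1 + ρ_inf ^ θ) * (1 + ρ ^ γ)) * U ^ θ :=
          mul_le_mul_of_nonneg_right e4 hUθ
      _ = 2 ^ θ * (1 + ρ_inf ^ θ) * U ^ θ * (1 + ρ ^ γ) := by ring
  have hIρ := hI ρ hρ hzone
  have hργ : (0:ℝ) ≤ ρ ^ γ := Real.rpow_nonneg hρ.le _
  have hIpos : 0 < a / (γ - 1) * ρ ^ γ
      - a * γ / (γ - 1) * ρ_inf ^ (γ - 1) * (ρ - ρ_inf) - a / (γ - 1) * ρ_inf ^ γ := by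
    nlinarith
  -- combine
  have t1 : 2 ^ θ * x ^ θ ≤ 2 ^ θ * (x ^ 2 / ρ + ρ ^ γ) :=
    mul_le_mul_of_nonneg_left hyoung h2θ.le
  have t2 : 2 ^ θ * ((ρ + ρ_inf) * U) ^ θ
      ≤ 2 ^ θ * (2 ^ θ * (1 + ρ_inf ^ θ) * U ^ θ * (1 + ρ ^ γ)) :=
    mul_le_mul_of_nonneg_left hY h2θ.le
  have hD : B * (1 + ρ ^ γ) ≤ (B / c) * (a / (γ - 1) * ρ ^ γ
      - a * γ / (γ - 1) * ρ_inf ^ (γ - 1) * (ρ - ρ_inf) - a / (γ - 1) * ρ_inf ^ γ) := by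
    have h1 := mul_le_mul_of_nonneg_left hIρ (le_of_lt (div_pos hB0 hc))
    have h2 : B / c * (c * (1 + ρ ^ γ)) = B * (1 + ρ ^ γ) := by
      field_simp
    linarith [h1, h2.le, h2.ge]
  have hE2 : (0:ℝ) ≤ B / c * (x ^ 2 / ρ / 2) := by positivity
  have hE3 : (0:ℝ) ≤ 2 ^ θ * 2 * (a / (γ - 1) * ρ ^ γ
      - a * γ / (γ - 1) * ρ_inf ^ (γ - 1) * (ρ - ρ_inf) - a / (γ - 1) * ρ_inf ^ γ) := by
    positivity
  have hx2 : 2 ^ θ * (x ^ 2 / ρ) = 2 ^ θ * 2 * (x ^ 2 / ρ / 2) := by ring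
  have hmul : 2 ^ θ * (x ^ θ + ((ρ + ρ_inf) * U) ^ θ)
      = 2 ^ θ * x ^ θ + 2 ^ θ * ((ρ + ρ_inf) * U) ^ θ := by ring
  rw [hmul] at hMθ
  -- final linear arithmetic
  nlinarith [hMθ, t1, t2, hD, hE2, hE3, hx2]
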